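/- The trefoil knot group ⟨a, b | aba = bab⟩ admits a surjective homomorphism onto the binary icosahedral group SL(2,5). -/

import Mathlib

def trefoilRels : Set (FreeGroup (Fin 2)) :=
  {FreeGroup.of 0 * FreeGroup.of 1 * FreeGroup.of 0 *
    (FreeGroup.of 1 * FreeGroup.of 0 * FreeGroup.of 1)⁻¹}

/-!
Send `a` to the upper transvection `!![1, 1; 0, 1]` and `b` to the lower transvection
`!![1, 0; -1, 1]`: both sides of the braid relation become `!![0, 1; -1, 0]`. Over any field,
`SL(2)` is generated by the upper and lower transvections, and over a prime field `ZMod p` every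
transvection is a power of the one with parameter `1` (or of its inverse, parameter `-1`).
Hence the image of the trefoil group is all of `SL(2, ZMod p)`, in particular of `SL(2, 5)`.
-/

section Trefoil

variable {G : Type*} [Group G] {a b : G}

def trefoilLift (h : a * b * a = b * a * b) : PresentedGroup trefoilRels →* G :=
  PresentedGroup.toGroup (f := ![a, b]) <| by
    rintro r rfl
    rw [map_mul, map_inv, mul_inv_eq_one]
    simpa using h

theorem closure_le_range_trefoilLift (h : a * b * a = b * a * b) :
    Subgroup.closure {a, b} ≤ (trefoilLift h).range := by
  rw [Subgroup.closure_le, Set.insert_subset_iff, Set.singleton_subset_iff]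
  exact ⟨⟨.of 0, PresentedGroup.toGroup.of _⟩, ⟨.of 1, PresentedGroup.toGroup.of _⟩⟩

theorem trefoilLift_surjective (h : a * b * a = b * a * b)
    (hab : Subgroup.closure {a, b} = ⊤) : Function.Surjective (trefoilLift h) := by
  rw [← MonoidHom.range_eq_top, eq_top_iff, ← hab]
  exact closure_le_range_trefoilLift h

end Trefoil

namespace Matrix.SpecialLinearGroup

open MatrixGroups

theorem transvection_braid {R : Type*} [CommRing R] :
    (transvection zero_ne_one 1 * transvection one_ne_zero (-1) * transvection zero_ne_one 1 :
      SL(2, R)) =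
      transvection one_ne_zero (-1) * transvection zero_ne_one 1 *
        transvection one_ne_zero (-1) := by
  ext i j
  fin_cases i <;> fin_cases j <;>
    simp [transvection_coe, Matrix.mul_apply, Fin.sum_univ_succ, Matrix.one_apply]

theorem transvection_mem_zpowers_transvection_one {ι : Type*} [DecidableEq ι] [Fintype ι]
    {n : ℕ} {i j : ι} (hij : i ≠ j) (c : ZMod n) :
    transvection hij c ∈ Subgroup.zpowers (transvection hij 1) := by
  obtain ⟨k, rfl⟩ := ZMod.intCast_surjective c
  induction k using Int.induction_on with
  | zero => simp
  | succ k ih =>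
    rw [Int.cast_add, Int.cast_one, transvection_add]
    exact mul_mem ih (Subgroup.mem_zpowers _)
  | pred k ih =>
    rw [Int.cast_sub, Int.cast_one, sub_eq_add_neg, transvection_add, ← transvection_inv]
    exact mul_mem ih (inv_mem (Subgroup.mem_zpowers _))

theorem closure_transvection_one_neg_one_eq_top (p : ℕ) [Fact p.Prime] :
    Subgroup.closure {transvection zero_ne_one 1, transvection one_ne_zero (-1)} =
      (⊤ : Subgroup SL(2, ZMod p)) := by
  set H : Subgroup SL(2, ZMod p) :=
    Subgroup.closure {transvection zero_ne_one 1, transvection one_ne_zero (-1)}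
  have upper (c : ZMod p) : transvection zero_ne_one c ∈ H :=
    Subgroup.zpowers_le_of_mem (Subgroup.subset_closure (by simp))
      (transvection_mem_zpowers_transvection_one _ c)
  have lower (c : ZMod p) : transvection one_ne_zero c ∈ H := by
    have hc := transvection_mem_zpowers_transvection_one (one_ne_zero : (1 : Fin 2) ≠ 0) c
    rw [← Subgroup.zpowers_inv, transvection_inv] at hc
    exact Subgroup.zpowers_le_of_mem (Subgroup.subset_closure (by simp)) hc
  refine (Subgroup.eq_top_iff' _).2 <|
    SL2.transvection_induction _ (fun i j hij c => ?_) (fun _ _ => mul_mem)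
  fin_cases i <;> fin_cases j
  exacts [absurd rfl hij, upper c, lower c, absurd rfl hij]

end Matrix.SpecialLinearGroup

theorem trefoil_onto_SL2_5 :
    ∃ f : PresentedGroup trefoilRels →* Matrix.SpecialLinearGroup (Fin 2) (ZMod 5),
      Function.Surjective f := by
  have : Fact (Nat.Prime 5) := ⟨Nat.prime_five⟩
  exact ⟨trefoilLift Matrix.SpecialLinearGroup.transvection_braid,
    trefoilLift_surjective _ (Matrix.SpecialLinearGroup.closure_transvection_one_neg_one_eq_top 5)⟩
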